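/- For real (or rational) parameters with n ≥ 1, a > 0, b > na, the function F(λ) = (2/3)·ν·(λ³·(-n) - 3λ²(b-na)) + 2λ² + 2λ(b-na), with ν = ((2-n)a+2b)/(2ab-na²), is continuous in λ, satisfies F(0) = 0, and F(a) < 0; hence there exists λ with 0 < λ < a and F(λ) < 0. -/

import Mathlib

open Set

/-! `F(a)` has the closed form `(2/3) n a² (a + n a - 2 b) / (2 b - n a)`, whose numerator is
negative and denominator positive once `b > n a ≥ a`; as `F` is a polynomial in `λ`, it stays
negative slightly to the left of `λ = a`. -/

theorem exists_mem_Ioo_lt_of_continuousWithinAt {α β : Type*} [TopologicalSpace α]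
    [LinearOrder α] [OrderTopology α] [DenselyOrdered α] [TopologicalSpace β] [LinearOrder β]
    [OrderClosedTopology β] {f : α → β} {c a : α} {y : β}
    (hf : ContinuousWithinAt f (Iio a) a) (hc : c < a) (hfa : f a < y) :
    ∃ x ∈ Ioo c a, f x < y :=
  haveI := nhdsLT_neBot_of_exists_lt ⟨c, hc⟩
  ((Filter.Tendsto.eventually_lt_const hfa hf).and (Ioo_mem_nhdsLT hc)).exists.imp
    fun _ h => ⟨h.2, h.1⟩

/-- The Futaki invariant `DF` of the slope test configuration of `(F_n, a Z_n + b F)` centred at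
`Z_n`, using `L·Z_n = b - n a`, `Z_n² = -n`, `g(Z_n) = 0` and `ν(L) = ((2-n)a + 2b)/(2ab - na²)`. -/
noncomputable def slopeFutaki (n a b l : ℝ) : ℝ :=
  (2 / 3) * (((2 - n) * a + 2 * b) / (2 * a * b - n * a ^ 2)) *
      (l ^ 3 * (-n) - 3 * l ^ 2 * (b - n * a)) + 2 * l ^ 2 + 2 * l * (b - n * a)

theorem continuous_slopeFutaki (n a b : ℝ) : Continuous (slopeFutaki n a b) := by
  unfold slopeFutaki
  fun_prop

theorem slopeFutaki_zero (n a b : ℝ) : slopeFutaki n a b 0 = 0 := by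
  simp [slopeFutaki]

theorem slopeFutaki_self {n a b : ℝ} (ha : a ≠ 0) (hb : 2 * b - n * a ≠ 0) :
    slopeFutaki n a b a = 2 / 3 * n * a ^ 2 * (a + n * a - 2 * b) / (2 * b - n * a) := by
  have hD : 2 * a * b - n * a ^ 2 = a * (2 * b - n * a) := by ring
  rw [slopeFutaki, hD]
  field_simp
  ring

theorem slopeFutaki_self_neg {n a b : ℝ} (hn : 1 ≤ n) (ha : 0 < a) (hb : n * a < b) :
    slopeFutaki n a b a < 0 := by
  have hden : 0 < 2 * b - n * a := by nlinarith
  have hnum : a + n * a - 2 * b < 0 := by nlinarith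
  rw [slopeFutaki_self ha.ne' hden.ne']
  exact div_neg_of_neg_of_pos
    (mul_neg_of_pos_of_neg (by positivity) hnum) hden

/-- The generalised Futaki invariant `F(λ)` of the slope test configuration of
`(F_n, aZ_n + bF)` centred at `Z_n` is continuous in `λ`, vanishes at `λ = 0`,
is negative at `λ = a`; hence it is negative for some `0 < λ < a`. -/
theorem futaki_continuous_negative (n : ℕ) (hn : 1 ≤ n) (a b : ℝ)
    (ha : 0 < a) (hb : (n : ℝ) * a < b) :
    let ν : ℝ := ((2 - (n : ℝ)) * a + 2 * b) / (2 * a * b - n * a ^ 2)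
    let F : ℝ → ℝ := fun l =>
      (2 / 3) * ν * (l ^ 3 * (-(n : ℝ)) - 3 * l ^ 2 * (b - n * a)) +
        2 * l ^ 2 + 2 * l * (b - n * a)
    Continuous F ∧ F 0 = 0 ∧ F a < 0 ∧ ∃ l : ℝ, 0 < l ∧ l < a ∧ F l < 0 := by
  show Continuous (slopeFutaki n a b) ∧ slopeFutaki n a b 0 = 0 ∧ slopeFutaki n a b a < 0 ∧
    ∃ l : ℝ, 0 < l ∧ l < a ∧ slopeFutaki n a b l < 0
  have hcont := continuous_slopeFutaki n a b
  have hFa := slopeFutaki_self_neg (by exact_mod_cast hn) ha hb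
  obtain ⟨l, ⟨hl₀, hla⟩, hFl⟩ :=
    exists_mem_Ioo_lt_of_continuousWithinAt hcont.continuousWithinAt ha hFa
  exact ⟨hcont, slopeFutaki_zero n a b, hFa, l, hl₀, hla, hFl⟩
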